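/- Let X be a real vector space, c : X → [0,∞] with c(0) = 0, and f : X → ℝ convex. Then f(x) - f(y) ≤ c(x - y) for all x, y ∈ X if and only if for every ε ≥ 0 and every x ∈ X, the ε-subdifferential of f at x is contained in the ε-subdifferential of c at 0. -/

import Mathlib

/-!
At every point `x` a convex `f` has an algebraic subgradient: the one-sided directional
derivative `v ↦ f'(x; v)` is positively homogeneous and convex, hence sublinear, and it is
dominated by `f (x + ·) - f x`, so Hahn–Banach gives a linear `φ ≤ f'(x; ·)`. Applying the
inclusion of subdifferentials with `ε = 0` to such a `φ` and evaluating at `x - y` gives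
`f x - f y ≤ φ (x - y) ≤ c (x - y)`. Conversely, an `ε`-subgradient `φ` of `f` at `x` satisfies
`φ y - ε ≤ f (x + y) - f x ≤ c y`.
-/
open Set Filter Topology

-- For convex `f` this one-sided derivative exists (`ConvexOn.hasDerivWithinAt_rightLineDeriv`);
-- in general `derivWithin` would return the junk value `0`.
noncomputable def rightLineDeriv {X : Type*} [AddCommGroup X] [Module ℝ X]
    (f : X → ℝ) (x v : X) : ℝ :=
  derivWithin (fun t : ℝ => f (x + t • v)) (Ioi 0) 0

namespace ConvexOn

variable {X : Type*} [AddCommGroup X] [Module ℝ X] {f : X → ℝ}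

lemma comp_add_smul (hf : ConvexOn ℝ univ f) (x v : X) :
    ConvexOn ℝ univ fun t : ℝ => f (x + t • v) := by
  refine ⟨convex_univ, fun s _ t _ a b ha hb hab => ?_⟩
  have hcomb : x + (a • s + b • t) • v = a • (x + s • v) + b • (x + t • v) := by
    conv_lhs => rw [← one_smul ℝ x, ← hab]
    module
  simpa only [hcomb] using hf.2 trivial trivial ha hb hab

lemma hasDerivWithinAt_rightLineDeriv (hf : ConvexOn ℝ univ f) (x v : X) :
    HasDerivWithinAt (fun t : ℝ => f (x + t • v)) (rightLineDeriv f x v) (Ioi 0) 0 :=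
  (hf.comp_add_smul x v).hasDerivWithinAt_rightDeriv_of_mem_interior (by simp)

lemma tendsto_slope_rightLineDeriv (hf : ConvexOn ℝ univ f) (x v : X) :
    Tendsto (fun t : ℝ => t⁻¹ * (f (x + t • v) - f x)) (𝓝[>] 0)
      (𝓝 (rightLineDeriv f x v)) := by
  refine ((hasDerivWithinAt_iff_tendsto_slope' self_notMem_Ioi).mp
    (hf.hasDerivWithinAt_rightLineDeriv x v)).congr fun t => ?_
  simp [slope_def_module]

lemma rightLineDeriv_le_sub (hf : ConvexOn ℝ univ f) (x v : X) :
    rightLineDeriv f x v ≤ f (x + v) - f x := by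
  simpa [slope_def_field] using (hf.comp_add_smul x v).le_slope_of_hasDerivWithinAt_Ioi
    trivial trivial one_pos (hf.hasDerivWithinAt_rightLineDeriv x v)

lemma rightLineDeriv_smul (hf : ConvexOn ℝ univ f) (x v : X) {a : ℝ} (ha : 0 < a) :
    rightLineDeriv f x (a • v) = a * rightLineDeriv f x v := by
  have hscale : HasDerivWithinAt (fun t : ℝ => a * t) a (Ioi 0) 0 := by
    simpa using (hasDerivWithinAt_id (0 : ℝ) (Ioi 0)).const_mul a
  have hcomp := (hf.hasDerivWithinAt_rightLineDeriv x v).scomp_of_eq 0 hscale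
    (fun t (ht : 0 < t) => mul_pos ha ht) (mul_zero a).symm
  have hfun : (fun t : ℝ => f (x + t • a • v)) = (fun t => f (x + t • v)) ∘ (a * ·) := by
    funext t
    simp [smul_smul, mul_comm]
  rw [rightLineDeriv, hfun, hcomp.derivWithin (uniqueDiffWithinAt_Ioi 0), smul_eq_mul]

lemma convexOn_rightLineDeriv (hf : ConvexOn ℝ univ f) (x : X) :
    ConvexOn ℝ univ (rightLineDeriv f x) := by
  refine ⟨convex_univ, fun v _ w _ a b ha hb hab => ?_⟩
  have hslope : ∀ t ∈ Ioi (0 : ℝ), t⁻¹ * (f (x + t • (a • v + b • w)) - f x) ≤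
      a • (t⁻¹ * (f (x + t • v) - f x)) + b • (t⁻¹ * (f (x + t • w) - f x)) := by
    intro t ht
    have hcomb : x + t • (a • v + b • w) = a • (x + t • v) + b • (x + t • w) := by
      conv_lhs => rw [← one_smul ℝ x, ← hab]
      module
    have h := hf.2 (mem_univ (x + t • v)) (mem_univ (x + t • w)) ha hb hab
    rw [← hcomb, smul_eq_mul, smul_eq_mul] at h
    have h' : f (x + t • (a • v + b • w)) - f x ≤
        a * (f (x + t • v) - f x) + b * (f (x + t • w) - f x) := by
      linear_combination h + f x * hab
    calc _ ≤ t⁻¹ * (a * (f (x + t • v) - f x) + b * (f (x + t • w) - f x)) :=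
          mul_le_mul_of_nonneg_left h' (inv_nonneg.2 (le_of_lt ht))
      _ = _ := by simp only [smul_eq_mul]; ring
  exact le_of_tendsto_of_tendsto (hf.tendsto_slope_rightLineDeriv x _)
    (((hf.tendsto_slope_rightLineDeriv x v).const_smul a).add
      ((hf.tendsto_slope_rightLineDeriv x w).const_smul b))
    (eventually_nhdsWithin_of_forall hslope)

lemma rightLineDeriv_add_le (hf : ConvexOn ℝ univ f) (x v w : X) :
    rightLineDeriv f x (v + w) ≤ rightLineDeriv f x v + rightLineDeriv f x w := by
  -- `f'(x; v + w) = 2 f'(x; v/2 + w/2)`, then convexity.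
  have hmid := (hf.convexOn_rightLineDeriv x).2 (mem_univ v) (mem_univ w)
    (by norm_num : (0 : ℝ) ≤ 1 / 2) (by norm_num : (0 : ℝ) ≤ 1 / 2) (by norm_num)
  rw [← smul_add, hf.rightLineDeriv_smul x _ (by norm_num), smul_eq_mul, smul_eq_mul] at hmid
  linarith

lemma exists_linearMap_le_sub (hf : ConvexOn ℝ univ f) (x : X) :
    ∃ φ : X →ₗ[ℝ] ℝ, ∀ v, φ v ≤ f (x + v) - f x := by
  have hzero : ∀ v : (⊥ : X →ₗ.[ℝ] ℝ).domain, (⊥ : X →ₗ.[ℝ] ℝ) v ≤ rightLineDeriv f x v := by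
    rintro ⟨v, hv⟩
    obtain rfl : v = 0 := (Submodule.mem_bot ℝ).1 hv
    show (0 : ℝ) ≤ _
    simp [rightLineDeriv]
  obtain ⟨φ, -, hφ⟩ := exists_extension_of_le_sublinear ⊥ (rightLineDeriv f x)
    (fun a ha v => hf.rightLineDeriv_smul x v ha) (hf.rightLineDeriv_add_le x) hzero
  exact ⟨φ, fun v => (hφ v).trans (hf.rightLineDeriv_le_sub x v)⟩

end ConvexOn

theorem stmt_1_general {X : Type*} [AddCommGroup X] [Module ℝ X]
    (c : X → EReal)
    (f : X → ℝ) (hf : ConvexOn ℝ Set.univ f) :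
    (∀ x y, ((f x - f y : ℝ) : EReal) ≤ c (x - y)) ↔
      ∀ ε : ℝ, 0 ≤ ε → ∀ x : X, ∀ φ : X →ₗ[ℝ] ℝ,
        (∀ y, φ (y - x) - ε ≤ f y - f x) →
        ∀ y, ((φ y - ε : ℝ) : EReal) ≤ c y := by
  constructor
  · intro hlip ε _ x φ hφ y
    have hsub : φ y - ε ≤ f (x + y) - f x := by simpa using hφ (x + y)
    calc ((φ y - ε : ℝ) : EReal) ≤ ((f (x + y) - f x : ℝ) : EReal) := by exact_mod_cast hsub
      _ ≤ c (x + y - x) := hlip _ _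
      _ = c y := by rw [add_sub_cancel_left]
  · intro hincl x y
    obtain ⟨φ, hφ⟩ := hf.exists_linearMap_le_sub x
    have hsubgrad : ∀ z, φ (z - x) - 0 ≤ f z - f x := fun z => by
      simpa using hφ (z - x)
    have hxy : f x - f y ≤ φ (x - y) - 0 := by
      have h := hφ (y - x)
      rw [add_sub_cancel, ← neg_sub, map_neg] at h
      linarith
    exact le_trans (by exact_mod_cast hxy) (hincl 0 le_rfl x φ hsubgrad (x - y))

/-- a convex real-valued function `f` on a real vector space is
`1`-`c`-Lipschitz (for a nonnegative coupling cost `c` with `c 0 = 0`) iff for every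
`ε ≥ 0` and every point `x`, the `ε`-subdifferential of `f` at `x` is contained in
the `ε`-subdifferential of `c` at `0`. -/
theorem stmt_1 {X : Type*} [AddCommGroup X] [Module ℝ X]
    (c : X → EReal) (hc_nonneg : ∀ x, 0 ≤ c x) (hc0 : c 0 = 0)
    (f : X → ℝ) (hf : ConvexOn ℝ Set.univ f) :
    (∀ x y, ((f x - f y : ℝ) : EReal) ≤ c (x - y)) ↔
      ∀ ε : ℝ, 0 ≤ ε → ∀ x : X, ∀ φ : X →ₗ[ℝ] ℝ,
        (∀ y, φ (y - x) - ε ≤ f y - f x) →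
        ∀ y, ((φ y - ε : ℝ) : EReal) ≤ c y :=
  stmt_1_general c f hf
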